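/- arXiv:2106.03061 — 6 statements merged into one kernel-verified Lean document; each statement's English description precedes it below -/
import Mathlib

section
/- Let b : ℕ^{<ℕ} → ℕ be a function, let ℓ ∈ ℕ, and let T be a finite tree (a finite downward-closed set of finite sequences of naturals) all of whose leaves have the same length, such that every non-leaf node t of T has at least ℓ·b(t) immediate successors in T. Then for any function f from the leaves of T to {0,...,ℓ-1}, there exists a subtree S ⊆ T of the same height such that every non-leaf node t of S has at least b(t) immediate successors in S, and f is constant on the leaves of S. -/
/-- `T` (as a set of finite sequences) is closed under initial segments. -/
def IsTreeF (T : Finset (List ℕ)) : Prop :=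
  ∀ s t : List ℕ, s <+: t → t ∈ T → s ∈ T

/-- `t` is a leaf (maximal node) of `T`. -/
def IsLeafF (T : Finset (List ℕ)) (t : List ℕ) : Prop :=
  t ∈ T ∧ ∀ n : ℕ, t ++ [n] ∉ T

/-- The set of immediate successors of `t` in `T`. -/
def succSet (T : Finset (List ℕ)) (t : List ℕ) : Set ℕ :=
  {n | t ++ [n] ∈ T}

/-- The height of a finite tree: the maximal length of its nodes. -/
def heightF (T : Finset (List ℕ)) : ℕ := T.sup List.length

lemma le_foldr_max {a : ℕ} : ∀ {l : List ℕ}, a ∈ l → a ≤ l.foldr max 0 := by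
  intro l
  induction l with
  | nil => simp
  | cons x xs ih =>
      intro h
      simp only [List.foldr_cons]
      rcases List.mem_cons.1 h with rfl | h
      · exact le_max_left _ _
      · exact le_trans (ih h) (le_max_right _ _)

/-- The immediate successors of `t` in `T`, as a Finset. -/
def kidsF (T : Finset (List ℕ)) (t : List ℕ) : Finset ℕ :=
  Finset.filter (fun n => t ++ [n] ∈ T)
    (Finset.range (T.sup (fun s => s.foldr max 0) + 1))

lemma mem_kidsF {T : Finset (List ℕ)} {t : List ℕ} {n : ℕ} :
    n ∈ kidsF T t ↔ t ++ [n] ∈ T := by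
  constructor
  · intro h; exact (Finset.mem_filter.1 h).2
  · intro h
    refine Finset.mem_filter.2 ⟨Finset.mem_range.2 ?_, h⟩
    have hn : n ∈ t ++ [n] := by simp
    have := le_foldr_max hn
    have h2 : (t ++ [n]).foldr max 0 ≤ T.sup (fun s => s.foldr max 0) :=
      Finset.le_sup h
    omega

lemma succSet_eq (T : Finset (List ℕ)) (t : List ℕ) :
    succSet T t = ↑(kidsF T t) := by
  ext n; simp [succSet, mem_kidsF]

noncomputable def gcol (b : List ℕ → ℕ) (ℓ : ℕ) (T : Finset (List ℕ))
    (f : List ℕ → ℕ) : ℕ → List ℕ → ℕ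
  | 0, t => f t
  | (k+1), t =>
      if hK : ∃ c, c < ℓ ∧
          b t ≤ ((kidsF T t).filter (fun n => gcol b ℓ T f k (t ++ [n]) = c)).card ∧
          0 < ((kidsF T t).filter (fun n => gcol b ℓ T f k (t ++ [n]) = c)).card
      then hK.choose else 0

lemma gcol_succ_spec (b : List ℕ → ℕ) (ℓ : ℕ) (T : Finset (List ℕ))
    (f : List ℕ → ℕ) (k : ℕ) (t : List ℕ)
    (hK : ∃ c, c < ℓ ∧
        b t ≤ ((kidsF T t).filter (fun n => gcol b ℓ T f k (t ++ [n]) = c)).card ∧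
        0 < ((kidsF T t).filter (fun n => gcol b ℓ T f k (t ++ [n]) = c)).card) :
    gcol b ℓ T f (k + 1) t < ℓ ∧
    b t ≤ ((kidsF T t).filter
      (fun n => gcol b ℓ T f k (t ++ [n]) = gcol b ℓ T f (k + 1) t)).card ∧
    0 < ((kidsF T t).filter
      (fun n => gcol b ℓ T f k (t ++ [n]) = gcol b ℓ T f (k + 1) t)).card := by
  have h1 : gcol b ℓ T f (k + 1) t = hK.choose := by
    rw [gcol]
    exact dif_pos hK
  rw [h1]
  exact hK.choose_spec

/-- fat-tree homogenization lemma for variable fatness `b`. -/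
theorem stmt0 (b : List ℕ → ℕ) (ℓ : ℕ) (T : Finset (List ℕ))
    (hT : IsTreeF T)
    (hleaf : ∀ t : List ℕ, IsLeafF T t → t.length = heightF T)
    (hfat : ∀ t ∈ T, ¬ IsLeafF T t → ℓ * b t ≤ (succSet T t).ncard)
    (f : List ℕ → ℕ) (hf : ∀ t : List ℕ, IsLeafF T t → f t < ℓ) :
    ∃ S : Finset (List ℕ), S ⊆ T ∧ IsTreeF S ∧ heightF S = heightF T ∧
      (∀ t ∈ S, ¬ IsLeafF S t → b t ≤ (succSet S t).ncard) ∧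
      ∃ c : ℕ, ∀ t : List ℕ, IsLeafF S t → f t = c := by
  classical
  rcases eq_or_ne T ∅ with rfl | hne
  · refine ⟨∅, Finset.Subset.refl _, ?_, rfl, ?_, 0, ?_⟩
    · intro s t _ ht; simp at ht
    · intro t ht; simp at ht
    · intro t ht; exact absurd ht.1 (by simp)
  have hneT : T.Nonempty := Finset.nonempty_iff_ne_empty.2 hne
  set h := heightF T with hh
  set g := gcol b ℓ T f with hg
  -- length bound
  have hlen : ∀ t ∈ T, t.length ≤ h := fun t ht => Finset.le_sup ht
  -- length h implies leaf
  have hlf : ∀ t ∈ T, t.length = h → IsLeafF T t := by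
    intro t ht hl
    refine ⟨ht, fun n hn => ?_⟩
    have := hlen _ hn
    simp [hl] at this
  -- length < h implies has a child
  have hchild : ∀ t ∈ T, t.length < h → ∃ n, t ++ [n] ∈ T := by
    intro t ht hl
    by_contra hc
    push_neg at hc
    have := hleaf t ⟨ht, hc⟩
    omega
  -- empty list in T
  have hnilT : ([] : List ℕ) ∈ T := by
    obtain ⟨x, hx⟩ := hneT
    exact hT [] x ⟨x, rfl⟩ hx
  -- ℓ positive
  have hℓ : 0 < ℓ := by
    obtain ⟨t, ht, hl⟩ := Finset.exists_mem_eq_sup T hneT List.length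
    have := hf t (hlf t ht hl.symm)
    omega
  -- the key lemma about gcol
  have key : ∀ k, ∀ t ∈ T, t.length + k = h →
      g k t < ℓ ∧ ∀ k', k = k' + 1 →
        b t ≤ ((kidsF T t).filter (fun n => g k' (t ++ [n]) = g k t)).card ∧
        0 < ((kidsF T t).filter (fun n => g k' (t ++ [n]) = g k t)).card := by
    intro k
    induction k with
    | zero =>
        intro t ht hl
        refine ⟨?_, fun k' hk' => by omega⟩
        have : g 0 t = f t := rfl
        rw [this]
        exact hf t (hlf t ht (by omega))
    | succ k ih =>
        intro t ht hl
        have hltl : t.length < h := by omega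
        have hchIH : ∀ n ∈ kidsF T t, g k (t ++ [n]) < ℓ := by
          intro n hn
          have hmem := mem_kidsF.1 hn
          have := ih (t ++ [n]) hmem (by simp; omega)
          exact this.1
        have hcard : ℓ * b t ≤ (kidsF T t).card := by
          have hnl : ¬ IsLeafF T t := by
            intro hL; have := hleaf t hL; omega
          have := hfat t ht hnl
          rwa [succSet_eq, Set.ncard_coe_finset] at this
        have hK : ∃ c, c < ℓ ∧
            b t ≤ ((kidsF T t).filter (fun n => g k (t ++ [n]) = c)).card ∧
            0 < ((kidsF T t).filter (fun n => g k (t ++ [n]) = c)).card := by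
          obtain ⟨c, hc, hcfib⟩ :=
            Finset.exists_le_card_fiber_of_mul_le_card_of_maps_to
              (t := Finset.range ℓ) (f := fun n => g k (t ++ [n]))
              (fun n hn => Finset.mem_range.2 (hchIH n hn))
              ⟨0, Finset.mem_range.2 hℓ⟩
              (by rwa [Finset.card_range])
          rcases Nat.eq_zero_or_pos
              ((kidsF T t).filter (fun n => g k (t ++ [n]) = c)).card with hz | hpos
          · -- fiber empty, so b t = 0; pick any child's color
            have hb0 : b t = 0 := by omega
            obtain ⟨n, hn⟩ := hchild t ht hltl
            have hn' : n ∈ kidsF T t := mem_kidsF.2 hn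
            refine ⟨g k (t ++ [n]), hchIH n hn', by omega, ?_⟩
            exact Finset.card_pos.2 ⟨n, Finset.mem_filter.2 ⟨hn', rfl⟩⟩
          · exact ⟨c, Finset.mem_range.1 hc, hcfib, hpos⟩
        have hspec := gcol_succ_spec b ℓ T f k t hK
        exact ⟨hspec.1, fun k' hk' => by
          have : k' = k := by omega
          subst this
          exact hspec.2⟩
  -- the subtree
  set P : List ℕ → Prop :=
    fun t => ∀ i < t.length, g (h - (i + 1)) (t.take (i + 1)) = g (h - i) (t.take i)
    with hP
  set S : Finset (List ℕ) := T.filter P with hS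
  have hSsub : S ⊆ T := Finset.filter_subset _ _
  have hmemS : ∀ {t}, t ∈ S ↔ t ∈ T ∧ P t := by
    intro t; simp [hS]
  have hStree : IsTreeF S := by
    intro s t hpre htS
    obtain ⟨htT, hPt⟩ := hmemS.1 htS
    refine hmemS.2 ⟨hT s t hpre htT, ?_⟩
    intro i hi
    obtain ⟨r, rfl⟩ := hpre
    have := hPt i (by simp; omega)
    rwa [List.take_append_of_le_length (by omega),
        List.take_append_of_le_length (by omega)] at this
  -- invariant: color along S
  have inv : ∀ m, ∀ t ∈ S, t.length = m → g (h - m) t = g h [] := by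
    intro m
    induction m with
    | zero =>
        intro t htS hl
        rw [List.length_eq_zero_iff.1 hl]
        simp
    | succ m ih =>
        intro t htS hl
        have hne' : t ≠ [] := by intro hc; subst hc; simp at hl
        have hdl : t.dropLast ∈ S :=
          hStree t.dropLast t (List.dropLast_prefix t) htS
        have hdll : t.dropLast.length = m := by
          rw [List.length_dropLast]; omega
        have hPt := (hmemS.1 htS).2 m (by omega)
        rw [List.take_of_length_le (by omega)] at hPt
        have htake : t.take m = t.dropLast := by
          rw [List.dropLast_eq_take]; congr 1; omega
        rw [htake] at hPt
        rw [hPt]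
        exact ih t.dropLast hdl hdll
  have hnilS : ([] : List ℕ) ∈ S := hmemS.2 ⟨hnilT, by intro i hi; simp at hi⟩
  -- extension
  have hext : ∀ t ∈ S, t.length < h →
      b t ≤ ((kidsF T t).filter
        (fun n => g (h - (t.length + 1)) (t ++ [n]) = g (h - t.length) t)).card ∧
      ∀ n ∈ (kidsF T t).filter
        (fun n => g (h - (t.length + 1)) (t ++ [n]) = g (h - t.length) t),
        t ++ [n] ∈ S := by
    intro t htS hlt
    have htT := hSsub htS
    set k := h - (t.length + 1) with hk
    have hk1 : h - t.length = k + 1 := by omega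
    have hkey := key (k + 1) t htT (by omega)
    have hfib := (hkey.2 k rfl)
    rw [← hk1] at hfib
    refine ⟨hfib.1, ?_⟩
    intro n hn
    obtain ⟨hnk, hnc⟩ := Finset.mem_filter.1 hn
    have hnT : t ++ [n] ∈ T := mem_kidsF.1 hnk
    refine hmemS.2 ⟨hnT, ?_⟩
    intro i hi
    simp only [List.length_append, List.length_singleton] at hi
    rcases lt_or_eq_of_le (Nat.lt_succ_iff.1 hi) with hi' | hi'
    · rw [List.take_append_of_le_length (by omega),
          List.take_append_of_le_length (by omega)]
      exact (hmemS.1 htS).2 i hi'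
    · subst hi'
      rw [List.take_of_length_le (by simp),
          List.take_append_of_le_length (le_refl _), List.take_length]
      exact hnc
  -- nonempty fibers: extension exists
  have hext' : ∀ t ∈ S, t.length < h → ∃ n, t ++ [n] ∈ S := by
    intro t htS hlt
    have htT := hSsub htS
    have hk1 : h - t.length = (h - (t.length + 1)) + 1 := by omega
    have hkey := key ((h - (t.length + 1)) + 1) t htT (by omega)
    have hfib := (hkey.2 _ rfl).2
    rw [← hk1] at hfib
    obtain ⟨n, hn⟩ := Finset.card_pos.1 hfib
    exact ⟨n, (hext t htS hlt).2 n (by rw [hk1] at hn ⊢; exact hn)⟩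
  -- height
  have hpath : ∀ j ≤ h, ∃ t ∈ S, t.length = j := by
    intro j
    induction j with
    | zero => intro _; exact ⟨[], hnilS, rfl⟩
    | succ j ih =>
        intro hj
        obtain ⟨t, htS, hl⟩ := ih (by omega)
        obtain ⟨n, hn⟩ := hext' t htS (by omega)
        exact ⟨t ++ [n], hn, by simp [hl]⟩
  have hheight : heightF S = h := by
    apply le_antisymm
    · exact Finset.sup_mono hSsub
    · obtain ⟨t, htS, hl⟩ := hpath h (le_refl h)
      calc h = t.length := hl.symm
        _ ≤ heightF S := Finset.le_sup htS
  -- leaves of S have length h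
  have hleafS : ∀ t, IsLeafF S t → t.length = h := by
    intro t ⟨htS, hnl⟩
    by_contra hc
    have : t.length < h := lt_of_le_of_ne (hlen t (hSsub htS)) hc
    obtain ⟨n, hn⟩ := hext' t htS this
    exact hnl n hn
  refine ⟨S, hSsub, hStree, hheight, ?_, g h [], ?_⟩
  · -- fatness
    intro t htS hnl
    have htT := hSsub htS
    have hlt : t.length < h := by
      rcases lt_or_eq_of_le (hlen t htT) with h' | h'
      · exact h'
      · exfalso
        have hLT := hlf t htT h'
        exact hnl ⟨htS, fun n hn => hLT.2 n (hSsub hn)⟩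
    obtain ⟨hcard, hmem⟩ := hext t htS hlt
    have hsubset : ↑((kidsF T t).filter
        (fun n => g (h - (t.length + 1)) (t ++ [n]) = g (h - t.length) t))
        ⊆ succSet S t := by
      intro n hn
      exact hmem n hn
    have hfin : (succSet S t).Finite := by
      rw [succSet_eq]; exact (kidsF S t).finite_toSet
    calc b t ≤ _ := hcard
      _ = (↑((kidsF T t).filter
            (fun n => g (h - (t.length + 1)) (t ++ [n]) = g (h - t.length) t)) :
            Set ℕ).ncard := (Set.ncard_coe_finset _).symm
      _ ≤ (succSet S t).ncard := Set.ncard_le_ncard hsubset hfin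
  · -- constancy
    intro t htL
    have hl := hleafS t htL
    have htT := hSsub htL.1
    have : f t = g (h - t.length) t := by
      rw [hl, Nat.sub_self]; rfl
    rw [this]
    exact inv t.length t htL.1 rfl
end

section
/- Let ℓ, m ∈ ℕ, and let T be a finite tree all of whose leaves have the same length, such that every non-leaf node has at least m·ℓ+1 immediate successors in T. Then for any function f from the leaves of T to {0,...,ℓ-1}, there exists a subtree S ⊆ T of the same height such that every non-leaf node of S has at least m+1 immediate successors in S, and f is constant on the leaves of S. -/
lemma succ_fin (T : Finset (List ℕ)) (t : List ℕ) : (succSet T t).Finite := by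
  have h : succSet T t = (fun n => t ++ [n]) ⁻¹' (T : Set (List ℕ)) := rfl
  rw [h]
  exact Set.Finite.preimage (fun a _ b _ hab => by simpa using hab) T.finite_toSet

open Classical in
/-- Backward-induction coloring of the tree nodes. -/
noncomputable def col (T : Finset (List ℕ)) (f : List ℕ → ℕ) (m : ℕ) : ℕ → List ℕ → ℕ
  | 0, t => f t
  | (k+1), t =>
    if IsLeafF T t then f t
    else if h : ∃ c, m + 1 ≤ {n | t ++ [n] ∈ T ∧ col T f m k (t ++ [n]) = c}.ncard
      then h.choose else 0

/-- an `(m·ℓ+1)`-fat finite tree with leaves of uniform length admits,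
for every `ℓ`-valued function on its leaves, an `(m+1)`-fat subtree of the same
height on whose leaves the function is constant. -/
theorem stmt1 (ℓ m : ℕ) (T : Finset (List ℕ))
    (hT : IsTreeF T)
    (hleaf : ∀ t : List ℕ, IsLeafF T t → t.length = heightF T)
    (hfat : ∀ t ∈ T, ¬ IsLeafF T t → m * ℓ + 1 ≤ (succSet T t).ncard)
    (f : List ℕ → ℕ) (hf : ∀ t : List ℕ, IsLeafF T t → f t < ℓ) :
    ∃ S : Finset (List ℕ), S ⊆ T ∧ IsTreeF S ∧ heightF S = heightF T ∧
      (∀ t ∈ S, ¬ IsLeafF S t → m + 1 ≤ (succSet S t).ncard) ∧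
      ∃ c : ℕ, ∀ t : List ℕ, IsLeafF S t → f t = c := by
  classical
  set h := heightF T with hh
  have hlen : ∀ t ∈ T, t.length ≤ h := fun t ht => Finset.le_sup ht
  have hleaf_of_len : ∀ t ∈ T, t.length = h → IsLeafF T t := by
    intro t ht hl
    refine ⟨ht, fun n hn => ?_⟩
    have h2 := hlen _ hn
    simp only [List.length_append, List.length_cons, List.length_nil] at h2
    omega
  have hnonleaf : ∀ t ∈ T, t.length < h → ¬ IsLeafF T t := by
    intro t ht hl hlf
    have := hleaf t hlf
    omega
  rcases T.eq_empty_or_nonempty with rfl | hne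
  · refine ⟨∅, le_refl _, fun s t hst ht => by simp at ht, rfl,
      fun t ht => by simp at ht, 0, fun t ht => by simpa using ht.1⟩
  -- T has a leaf, so ℓ ≥ 1
  obtain ⟨t0, ht0, hmax0⟩ := T.exists_max_image List.length hne
  have hleaf0 : IsLeafF T t0 := by
    refine hleaf_of_len t0 ht0 (le_antisymm (hlen t0 ht0) ?_)
    rw [hh, heightF]
    exact Finset.sup_le hmax0
  have hl1 : 1 ≤ ℓ := Nat.lt_of_le_of_lt (Nat.zero_le _) (hf t0 hleaf0)
  -- key lemma about the coloring
  have key : ∀ k, ∀ t ∈ T, t.length + k = h →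
      col T f m k t < ℓ ∧
      (¬ IsLeafF T t → ∃ k', k = k' + 1 ∧
        m + 1 ≤ {n | t ++ [n] ∈ T ∧ col T f m k' (t ++ [n]) = col T f m k t}.ncard) := by
    intro k
    induction k with
    | zero =>
      intro t ht hk
      have hlf := hleaf_of_len t ht (by omega)
      exact ⟨by simpa [col] using hf t hlf, fun h' => absurd hlf h'⟩
    | succ k ih =>
      intro t ht hk
      have hlf : ¬ IsLeafF T t := hnonleaf t ht (by omega)
      -- pigeonhole among successors
      have hmap : ∀ n ∈ (succ_fin T t).toFinset,
          col T f m k (t ++ [n]) ∈ Finset.range ℓ := by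
        intro n hn
        rw [Set.Finite.mem_toFinset] at hn
        have hnT : t ++ [n] ∈ T := hn
        have := (ih (t ++ [n]) hnT (by
          simp only [List.length_append, List.length_cons, List.length_nil]; omega)).1
        simpa using this
      have hcards : (Finset.range ℓ).card * m < (succ_fin T t).toFinset.card := by
        have h1 := hfat t ht hlf
        rw [Set.ncard_eq_toFinset_card _ (succ_fin T t)] at h1
        rw [Finset.card_range]
        nlinarith [h1]
      obtain ⟨c, -, hc⟩ :=
        Finset.exists_lt_card_fiber_of_mul_lt_card_of_maps_to hmap hcards
      have hex : ∃ c, m + 1 ≤ {n | t ++ [n] ∈ T ∧ col T f m k (t ++ [n]) = c}.ncard := by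
        refine ⟨c, ?_⟩
        have heq : {n | t ++ [n] ∈ T ∧ col T f m k (t ++ [n]) = c} =
            ↑({x ∈ (succ_fin T t).toFinset | col T f m k (t ++ [x]) = c}) := by
          ext n
          simp [Set.Finite.mem_toFinset, succSet]
        rw [heq, Set.ncard_coe_finset]
        omega
      have hcol : col T f m (k+1) t = hex.choose := by
        rw [col, if_neg hlf, dif_pos hex]
      have hspec := hex.choose_spec
      rw [← hcol] at hspec
      have hne' : {n | t ++ [n] ∈ T ∧ col T f m k (t ++ [n]) = col T f m (k+1) t}.Nonempty := by
        apply Set.nonempty_of_ncard_ne_zero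
        omega
      obtain ⟨n, hnT, hnc⟩ := hne'
      have hlt : col T f m (k+1) t < ℓ := by
        rw [← hnc]
        exact (ih (t ++ [n]) hnT (by
          simp only [List.length_append, List.length_cons, List.length_nil]; omega)).1
      exact ⟨hlt, fun _ => ⟨k, rfl, hspec⟩⟩
  -- the monochromatic subtree
  have hroot : ([] : List ℕ) ∈ T := by
    obtain ⟨t, ht⟩ := hne
    exact hT [] t (List.nil_prefix) ht
  set c₀ := col T f m h [] with hc₀
  set S := {t ∈ T | ∀ s, s <+: t → col T f m (h - s.length) s = c₀} with hSdef
  have hmemS : ∀ t, t ∈ S ↔ t ∈ T ∧ ∀ s, s <+: t → col T f m (h - s.length) s = c₀ := by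
    intro t; simp [hSdef]
  have hSsub : S ⊆ T := Finset.filter_subset _ _
  have hrootS : ([] : List ℕ) ∈ S := by
    rw [hmemS]
    refine ⟨hroot, fun s hs => ?_⟩
    have : s = [] := List.prefix_nil.mp hs
    subst this
    simp [hc₀]
  -- fatness of S relative to T-nonleaves
  have hfatS : ∀ t ∈ S, ¬ IsLeafF T t → m + 1 ≤ (succSet S t).ncard := by
    intro t htS hlf
    rw [hmemS] at htS
    obtain ⟨htT, hcol⟩ := htS
    have hltlen : t.length < h := by
      have h1 := hlen t htT
      rcases Nat.lt_or_ge t.length h with h2 | h2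
      · exact h2
      · exact absurd (hleaf_of_len t htT (by omega)) hlf
    obtain ⟨-, hsp⟩ := key (h - t.length) t htT (by omega)
    obtain ⟨k', hk', hcard⟩ := hsp hlf
    have hc0 : col T f m (h - t.length) t = c₀ := hcol t (List.prefix_refl t)
    rw [hc0] at hcard
    have hsub : {n | t ++ [n] ∈ T ∧ col T f m k' (t ++ [n]) = c₀} ⊆ succSet S t := by
      rintro n ⟨hnT, hnc⟩
      show t ++ [n] ∈ S
      rw [hmemS]
      refine ⟨hnT, fun s hs => ?_⟩
      rcases Nat.lt_or_ge s.length (t.length + 1) with h1 | h1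
      · exact hcol s (List.prefix_of_prefix_length_le hs (t.prefix_append [n]) (by omega))
      · have hslen : s.length = (t ++ [n]).length := by
          have := hs.length_le
          simp only [List.length_append, List.length_cons, List.length_nil] at this ⊢
          omega
        have heqs : s = t ++ [n] := hs.eq_of_length hslen
        rw [heqs, show h - (t ++ [n]).length = k' from by
          simp only [List.length_append, List.length_cons, List.length_nil]; omega]
        exact hnc
    calc m + 1 ≤ _ := hcard
      _ ≤ (succSet S t).ncard := Set.ncard_le_ncard hsub (succ_fin S t)
  have hsuccS : ∀ t ∈ S, ¬ IsLeafF T t → ∃ n, t ++ [n] ∈ S := by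
    intro t htS hlf
    have := hfatS t htS hlf
    have hne' : (succSet S t).Nonempty := Set.nonempty_of_ncard_ne_zero (by omega)
    exact hne'
  have hleafST : ∀ t, IsLeafF S t → IsLeafF T t := by
    rintro t ⟨htS, hns⟩
    by_contra hlf
    obtain ⟨n, hn⟩ := hsuccS t htS hlf
    exact hns n hn
  refine ⟨S, hSsub, ?_, ?_, ?_, c₀, ?_⟩
  · -- IsTreeF S
    intro s t hst htS
    rw [hmemS] at htS ⊢
    exact ⟨hT s t hst htS.1, fun s' hs' => htS.2 s' (hs'.trans hst)⟩
  · -- heightF S = h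
    refine le_antisymm (Finset.sup_mono hSsub) ?_
    obtain ⟨t1, ht1, hmax1⟩ := S.exists_max_image List.length ⟨[], hrootS⟩
    have hleafS1 : IsLeafF S t1 := by
      refine ⟨ht1, fun n hn => ?_⟩
      have := hmax1 _ hn
      simp only [List.length_append, List.length_cons, List.length_nil] at this
      omega
    have := hleaf t1 (hleafST t1 hleafS1)
    calc h = t1.length := this.symm
      _ ≤ heightF S := Finset.le_sup ht1
  · -- fatness of S
    intro t htS hlfS
    refine hfatS t htS fun hlf => hlfS ⟨htS, fun n hn => hlf.2 n (hSsub hn)⟩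
  · -- f constant on leaves of S
    intro t hlfS
    have hlfT := hleafST t hlfS
    have hlenT : t.length = h := hleaf t hlfT
    have htS := hlfS.1
    rw [hmemS] at htS
    have := htS.2 t (List.prefix_refl t)
    rw [hlenT] at this
    simpa [col] using this
end

section
/- LLPO_{m/k} is one-query bilayered Turing reducible to Error_{m/(k+1)}: there exist a computable outer reduction K and a secret inner reduction L such that for every e with |{j < k : φ_e(j)↓}| ≤ m and every a ∈ {0,...,k} \ L(e), K(e,a) is defined and φ_e(K(e,a)) diverges with K(e,a) < k. -/
/-!
On input `(e, a)` with `a < k` the outer reduction answers `a`. On input `(e, k)` it runs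
`φ_e` on all `j < k` in parallel until `m` of them have halted and answers the least `j < k` that
has not halted yet. The secret set `L e` contains the halting set `H = {j < k | φ_e(j)↓}`,
padded to size `m` with `k` when `|H| < m`. An answer `a < k` outside `L e` is thus outside `H`,
and `k` lies outside `L e` only when `|H| = m`: then the search stops exactly when all of `H` has
appeared, and `m < k` leaves an input below `k` on which `φ_e` diverges.
-/

/-- The `e`-th partial computable function. -/
def φ (e n : ℕ) : Part ℕ :=
  (Denumerable.ofNat Nat.Partrec.Code e).eval n

open Finset Nat.Partrec Nat.Partrec.Code Denumerable

theorem Finset.exists_subsuperset_card_eq_and_mem_or_eq {α : Type*} [DecidableEq α]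
    {H U : Finset α} {x : α} {m : ℕ} (hHU : H ⊆ U) (hx : x ∈ U) (hHm : #H ≤ m)
    (hmU : m ≤ #U) : ∃ L ⊆ U, H ⊆ L ∧ #L = m ∧ (x ∈ L ∨ L = H) := by
  obtain hlt | rfl := hHm.lt_or_eq
  · obtain ⟨L, hHL, hLU, hL⟩ := exists_subsuperset_card_eq (insert_subset hx hHU)
      ((card_insert_le x H).trans hlt) hmU
    exact ⟨L, hLU, (subset_insert x H).trans hHL, hL, .inl (hHL (mem_insert_self x H))⟩
  · exact ⟨H, hHU, subset_rfl, rfl, .inr rfl⟩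

theorem List.findIdx_range_lt_and_spec {k : ℕ} {p : ℕ → Bool} (h : ∃ j < k, p j) :
    (range k).findIdx p < k ∧ p ((range k).findIdx p) := by
  have hlt : (range k).findIdx p < (range k).length :=
    findIdx_lt_length_of_exists (by simpa using h)
  have hp := findIdx_getElem (w := hlt)
  rw [getElem_range] at hp
  exact ⟨by simpa using hlt, hp⟩

def haltedWithin (k e s : ℕ) : Finset ℕ :=
  {j ∈ range k | (evaln s (ofNat Code e) j).isSome}

open Classical in
noncomputable def haltingSet (k e : ℕ) : Finset ℕ :=
  {j ∈ range k | (φ e j).Dom}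

def firstUnhalted (k e s : ℕ) : ℕ :=
  (List.range k).findIdx fun j => (evaln s (ofNat Code e) j).isNone

def outerReduction (m k e a : ℕ) : Part ℕ :=
  if a < k then Part.some a
  else (Nat.rfind fun s => (#(haltedWithin k e s) = m : Bool)).map (firstUnhalted k e)

section

variable {k e s j : ℕ}

@[simp]
theorem mem_haltedWithin :
    j ∈ haltedWithin k e s ↔ j < k ∧ (evaln s (ofNat Code e) j).isSome := by
  simp [haltedWithin]

@[simp]
theorem mem_haltingSet : j ∈ haltingSet k e ↔ j < k ∧ (φ e j).Dom := by
  simp [haltingSet]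

theorem ncard_setOf_dom_eq_card_haltingSet :
    {j | j < k ∧ (φ e j).Dom}.ncard = #(haltingSet k e) := by
  rw [← Set.ncard_coe_finset]
  congr
  ext
  simp

theorem haltingSet_subset_range : haltingSet k e ⊆ range k :=
  fun _ hj => mem_range.2 (mem_haltingSet.1 hj).1

theorem haltedWithin_subset_haltingSet : haltedWithin k e s ⊆ haltingSet k e := by
  intro j hj
  obtain ⟨hjk, hs⟩ := mem_haltedWithin.1 hj
  obtain ⟨y, hy⟩ := Option.isSome_iff_exists.1 hs
  exact mem_haltingSet.2 ⟨hjk, Part.dom_iff_mem.2 ⟨y, evaln_sound hy⟩⟩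

theorem exists_haltedWithin_eq_haltingSet (k e : ℕ) :
    ∃ s, haltedWithin k e s = haltingSet k e := by
  have hev : ∀ᶠ s in Filter.atTop, ∀ j ∈ haltingSet k e,
      (evaln s (ofNat Code e) j).isSome := by
    refine (Filter.eventually_all_finset _).2 fun j hj => Filter.eventually_atTop.2 ?_
    obtain ⟨s₀, hs₀⟩ := evaln_complete.1 (Part.get_mem (mem_haltingSet.1 hj).2)
    exact ⟨s₀, fun s hs => Option.isSome_iff_exists.2 ⟨_, evaln_mono hs hs₀⟩⟩
  obtain ⟨s, hs⟩ := hev.exists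
  exact ⟨s, haltedWithin_subset_haltingSet.antisymm fun j hj =>
    mem_haltedWithin.2 ⟨(mem_haltingSet.1 hj).1, hs j hj⟩⟩

theorem firstUnhalted_lt_and_notMem (h : #(haltedWithin k e s) < k) :
    firstUnhalted k e s < k ∧ firstUnhalted k e s ∉ haltedWithin k e s := by
  obtain ⟨j, hj, hjs⟩ := exists_mem_notMem_of_card_lt_card (h.trans_eq (card_range k).symm)
  obtain ⟨hlt, hnone⟩ : firstUnhalted k e s < k ∧
      (evaln s (ofNat Code e) (firstUnhalted k e s)).isNone :=
    List.findIdx_range_lt_and_spec ⟨j, mem_range.1 hj, by simpa [mem_range.1 hj] using hjs⟩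
  simp_all [Option.isNone_iff_eq_none]

end

theorem primrec_evaln_ofNat :
    Primrec fun x : (ℕ × ℕ) × ℕ => evaln x.1.2 (ofNat Code x.1.1) x.2 :=
  primrec_evaln.comp <|
    ((Primrec.snd.comp .fst).pair ((Primrec.ofNat Code).comp (Primrec.fst.comp .fst))).pair .snd

theorem primrec_card_haltedWithin (k : ℕ) :
    Primrec fun p : ℕ × ℕ => #(haltedWithin k p.1 p.2) := by
  have hR : PrimrecRel fun (j : ℕ) (p : ℕ × ℕ) => (evaln p.2 (ofNat Code p.1) j).isSome :=
    ⟨inferInstance, (Primrec.option_isSome.comp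
      (primrec_evaln_ofNat.comp (.pair .snd .fst))).of_eq fun _ => by simp⟩
  refine (Primrec.list_length.comp ((PrimrecRel.listFilter hR).comp
    (.const (List.range k)) .id)).of_eq fun p => ?_
  simp [haltedWithin, card_def, filter_val, range_val, Multiset.range, Multiset.filter_coe]

theorem primrec_firstUnhalted (k : ℕ) :
    Primrec fun p : ℕ × ℕ => firstUnhalted k p.1 p.2 := by
  have hnone : Primrec fun x : (ℕ × ℕ) × ℕ => (evaln x.1.2 (ofNat Code x.1.1) x.2).isNone :=
    (Primrec.not.comp (Primrec.option_isSome.comp primrec_evaln_ofNat)).of_eq fun x => by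
      cases evaln x.1.2 (ofNat Code x.1.1) x.2 <;> rfl
  exact Primrec.list_findIdx (.const (List.range k)) hnone.to₂

theorem partrec₂_outerReduction (m k : ℕ) : Partrec₂ (outerReduction m k) := by
  have hcount :
      Computable₂ fun (p : ℕ × ℕ) (s : ℕ) => decide (#(haltedWithin k p.1 s) = m) :=
    (Primrec.eq.comp ((primrec_card_haltedWithin k).comp ((Primrec.fst.comp .fst).pair .snd))
      (.const m)).decide.to_comp
  have hsearch : Partrec fun p : ℕ × ℕ =>
      (Nat.rfind fun s => (decide (#(haltedWithin k p.1 s) = m) : Bool)).map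
        (firstUnhalted k p.1) :=
    (Partrec.rfind hcount.partrec₂).map
      ((primrec_firstUnhalted k).comp ((Primrec.fst.comp .fst).pair .snd)).to_comp
  have hlt : Computable fun p : ℕ × ℕ => decide (p.2 < k) :=
    (Primrec.nat_lt.comp .snd (.const k)).decide.to_comp
  exact (Partrec.cond hlt Computable.snd hsearch).of_eq fun p => by
    by_cases h : p.2 < k <;> simp [outerReduction, h]

theorem mem_outerReduction_of_lt {m k e a : ℕ} (h : a < k) : a ∈ outerReduction m k e a := by
  simp [outerReduction, h]

theorem exists_mem_outerReduction_self {m k e : ℕ} (hmk : m < k)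
    (hcard : #(haltingSet k e) = m) :
    ∃ y ∈ outerReduction m k e k, y < k ∧ ¬(φ e y).Dom := by
  obtain ⟨s, hs⟩ := exists_haltedWithin_eq_haltingSet k e
  obtain ⟨s₀, hs₀, -⟩ := Nat.rfind_min' (p := fun s => decide (#(haltedWithin k e s) = m))
    (m := s) (by simp [hs, hcard])
  have hcard₀ : #(haltedWithin k e s₀) = m := by simpa using Nat.rfind_spec hs₀
  have heq : haltedWithin k e s₀ = haltingSet k e :=
    eq_of_subset_of_card_le haltedWithin_subset_haltingSet (by rw [hcard₀, hcard])
  obtain ⟨hlt, hnot⟩ := firstUnhalted_lt_and_notMem (hcard₀.trans_lt hmk)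
  refine ⟨firstUnhalted k e s₀, ?_, hlt,
    fun hdom => hnot (heq ▸ mem_haltingSet.2 ⟨hlt, hdom⟩)⟩
  rw [outerReduction, if_neg (lt_irrefl k)]
  exact Part.mem_map _ hs₀

theorem exists_innerReduction {m k : ℕ} (hmk : m ≤ k + 1) :
    ∃ L : ℕ → Finset ℕ, ∀ e, #(haltingSet k e) ≤ m → L e ⊆ range (k + 1) ∧
      haltingSet k e ⊆ L e ∧ #(L e) = m ∧ (k ∈ L e ∨ L e = haltingSet k e) := by
  have hL : ∀ e, ∃ L : Finset ℕ, #(haltingSet k e) ≤ m → L ⊆ range (k + 1) ∧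
      haltingSet k e ⊆ L ∧ #L = m ∧ (k ∈ L ∨ L = haltingSet k e) := fun e => by
    by_cases he : #(haltingSet k e) ≤ m
    · obtain ⟨L, hLU, hL⟩ := exists_subsuperset_card_eq_and_mem_or_eq
        (haltingSet_subset_range.trans (range_subset_range.2 k.le_succ))
        (self_mem_range_succ k) he (by simpa using hmk)
      exact ⟨L, fun _ => ⟨hLU, hL⟩⟩
    · exact ⟨∅, fun h => absurd h he⟩
  choose L hL using hL
  exact ⟨L, hL⟩

/-- `LLPO_{m/k} ≤¹_LT Error_{m/(k+1)}`: there are a partial computable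
outer reduction `K` and a secret inner reduction `L` such that for every
`e ∈ dom(LLPO_{m/k})`, `L e` is an `m`-element subset of `{0,…,k}`, and for every
`a ∈ {0,…,k} \ L e`, `K e a` is defined with value `< k` on which `φ_e` diverges. -/
theorem stmt3 (m k : ℕ) (hmk : m < k) :
    ∃ K : ℕ → ℕ →. ℕ, Partrec₂ K ∧ ∃ L : ℕ → Finset ℕ,
      ∀ e : ℕ, {j : ℕ | j < k ∧ (φ e j).Dom}.ncard ≤ m →
        (L e ⊆ Finset.range (k + 1) ∧ (L e).card = m) ∧
        ∀ a ∈ Finset.range (k + 1) \ L e,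
          ∃ y : ℕ, y ∈ K e a ∧ y < k ∧ ¬ (φ e y).Dom := by
  obtain ⟨L, hL⟩ := exists_innerReduction (m := m) (k := k) (by omega)
  refine ⟨outerReduction m k, partrec₂_outerReduction m k, L, fun e he => ?_⟩
  rw [ncard_setOf_dom_eq_card_haltingSet] at he
  obtain ⟨hLU, hHL, hLm, hkL⟩ := hL e he
  refine ⟨⟨hLU, hLm⟩, fun a ha => ?_⟩
  obtain ⟨hak, haL⟩ := mem_sdiff.1 ha
  obtain hak | rfl := (Nat.lt_succ_iff.1 (mem_range.1 hak)).lt_or_eq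
  · exact ⟨a, mem_outerReduction_of_lt hak, hak,
      fun hdom => haL (hHL (mem_haltingSet.2 ⟨hak, hdom⟩))⟩
  · exact exists_mem_outerReduction_self hmk (by rw [← hkL.resolve_left haL, hLm])
end

section
/- For natural numbers m ≤ k and ℓ, if ⌈k/m⌉ ≤ ℓ then Error_{1/ℓ} is one-query bilayered Turing reducible to Error_{m/k}: there is a computable map K : {0,...,k-1} → {0,...,ℓ-1} and for each A ⊆ {0,...,ℓ-1} with |A| = 1 a set L(A) ⊆ {0,...,k-1} with |L(A)| = m such that a ∈ {0,...,k-1} \ L(A) implies K(a) ∉ A. -/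
/-- if `⌈k/m⌉ ≤ ℓ` then `Error_{1/ℓ} ≤¹_LT Error_{m/k}`: there is a
computable `K : {0,…,k-1} → {0,…,ℓ-1}` and, for each singleton `A ⊆ {0,…,ℓ-1}`,
an `m`-element set `L A ⊆ {0,…,k-1}` such that `a ∈ {0,…,k-1} \ L A` implies
`K a ∉ A`. -/
theorem stmt5 (m k ℓ : ℕ) (hm : 0 < m) (hmk : m ≤ k) (h : (k + m - 1) / m ≤ ℓ) :
    ∃ K : ℕ → ℕ, Computable K ∧ (∀ a < k, K a < ℓ) ∧
      ∃ L : Finset ℕ → Finset ℕ,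
        ∀ A : Finset ℕ, A ⊆ Finset.range ℓ → A.card = 1 →
          L A ⊆ Finset.range k ∧ (L A).card = m ∧
          ∀ a < k, a ∉ L A → K a ∉ A := by
  have hkl : k ≤ ℓ * m := by
    have h1 : (k + m - 1) / m < ℓ + 1 := Nat.lt_succ_of_le h
    rw [Nat.div_lt_iff_lt_mul hm] at h1
    have h2 : (ℓ + 1) * m = ℓ * m + m := by ring
    omega
  have hl : 0 < ℓ := by
    rcases Nat.eq_zero_or_pos ℓ with h0 | h0
    · subst h0; simp at hkl; omega
    · exact h0
  set K : ℕ → ℕ := fun a => min (a / m) (ℓ - 1) with hK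
  refine ⟨K, ?_, ?_, ?_⟩
  · exact Primrec.to_comp (Primrec.nat_min.comp
      (Primrec.nat_div.comp Primrec.id (Primrec.const m)) (Primrec.const (ℓ - 1)))
  · intro a ha
    simp only [hK]
    omega
  · -- define L
    have key : ∀ A : Finset ℕ, A ⊆ Finset.range ℓ → A.card = 1 →
        ∃ S : Finset ℕ, S ⊆ Finset.range k ∧ S.card = m ∧
          ((Finset.range k).filter (fun a => K a ∈ A)) ⊆ S := by
      intro A hA hcard
      obtain ⟨j, hj⟩ := Finset.card_eq_one.mp hcard
      subst hj
      have hjl : j < ℓ := Finset.mem_range.mp (hA (Finset.mem_singleton_self j))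
      have hsub : ((Finset.range k).filter (fun a => K a ∈ ({j} : Finset ℕ)))
          ⊆ Finset.Ico (j * m) (j * m + m) := by
        intro a ha
        simp only [Finset.mem_filter, Finset.mem_range, Finset.mem_singleton, hK] at ha
        obtain ⟨hak, haj⟩ := ha
        simp only [Finset.mem_Ico]
        rcases Nat.lt_or_ge j (ℓ - 1) with hcase | hcase
        · have : a / m = j := by omega
          constructor
          · calc j * m = a / m * m := by rw [this]
              _ ≤ a := Nat.div_mul_le_self a m
          · have h3 : a < (j + 1) * m := (Nat.div_lt_iff_lt_mul hm).mp (by omega)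
            have : (j + 1) * m = j * m + m := by ring
            omega
        · have hj' : j = ℓ - 1 := by omega
          have hdiv : ℓ - 1 ≤ a / m := by omega
          constructor
          · calc j * m ≤ a / m * m := Nat.mul_le_mul_right m (by omega)
              _ ≤ a := Nat.div_mul_le_self a m
          · subst hj'
            have : (ℓ - 1) * m + m = ℓ * m := by
              have : ℓ = ℓ - 1 + 1 := by omega
              nlinarith [this]
            omega
      have hcardle : ((Finset.range k).filter (fun a => K a ∈ ({j} : Finset ℕ))).card ≤ m := by
        calc _ ≤ (Finset.Ico (j * m) (j * m + m)).card := Finset.card_le_card hsub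
          _ = m := by rw [Nat.card_Ico]; omega
      obtain ⟨S, hS1, hS2, hS3⟩ := Finset.exists_subsuperset_card_eq
        (Finset.filter_subset (fun a => K a ∈ ({j} : Finset ℕ)) (Finset.range k)) hcardle
        (by simpa using hmk)
      exact ⟨S, hS2, hS3, hS1⟩
    choose! L hL1 hL2 hL3 using key
    refine ⟨L, fun A hA hc => ⟨hL1 A hA hc, hL2 A hA hc, fun a ha hnot => ?_⟩⟩
    intro hKa
    exact hnot (hL3 A hA hc (Finset.mem_filter.mpr ⟨Finset.mem_range.mpr ha, hKa⟩))
end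

section
/- The meet construction preserves non-computability from both sides: let A :⊆ ℕ × Λ₁ ⇉ ℕ and B :⊆ ℕ × Λ₂ ⇉ ℕ be bilayer functions with B total in its public argument (dom_pub(B) = ℕ), and define (A ⊓ B)(⟨m,n⟩ ∣ (c,d)) = ({0} × A(m ∣ c)) ∪ ({1} × B(n ∣ d)). If there is a computable function p : ℕ × ℕ → ℕ with p(m,n) ∈ (A ⊓ B)(⟨m,n⟩ ∣ (c,d)) for all valid inputs, then either A has a computable choice function uniform in its public input, or B does. -/
/-!
Read the value `p m n` as a tagged answer. If, for every `m` in the public domain of `A`, some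
`n` makes `p m n` a left answer `⟨0, a⟩`, then `a` is correct for every secret `c` (pair `c`
with any `d` for `n`, which exists since `B` is total), so an unbounded search over `n` computes
a choice for `A`. Otherwise some `m₀` with a valid secret `c₀` yields only right answers
`⟨1, b⟩`, and reading off `b` from `p m₀ n` is then a computable choice for `B`.
-/

def IsUniformChoice {Λ : Type*} (dom : ℕ → Λ → Prop) (val : ℕ → Λ → Set ℕ) (q : ℕ →. ℕ) :
    Prop :=
  ∀ m, (∃ c, dom m c) → ∃ y ∈ q m, ∀ c, dom m c → y ∈ val m c

/-- Membership of a code in `({0} × S) ∪ ({1} × T)`, pairs being coded by `Nat.pair`. -/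
def InMeet (S T : Set ℕ) (k : ℕ) : Prop :=
  (∃ a ∈ S, k = Nat.pair 0 a) ∨ (∃ b ∈ T, k = Nat.pair 1 b)

def meetLeft (k : ℕ) : Option ℕ :=
  if k.unpair.1 = 0 then some k.unpair.2 else none

theorem computable_meetLeft : Computable meetLeft :=
  (Primrec.ite (Primrec.eq.comp (Primrec.fst.comp Primrec.unpair) (Primrec.const 0))
    (Primrec.option_some.comp (Primrec.snd.comp Primrec.unpair)) (Primrec.const none)).to_comp

@[simp]
theorem meetLeft_pair_zero (a : ℕ) : meetLeft (Nat.pair 0 a) = some a := by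
  simp [meetLeft]

@[simp]
theorem meetLeft_pair_one (b : ℕ) : meetLeft (Nat.pair 1 b) = none := by
  simp [meetLeft]

theorem InMeet.mem_left {S T : Set ℕ} {k y : ℕ} (h : InMeet S T k) (hy : y ∈ meetLeft k) :
    y ∈ S := by
  rcases h with ⟨a, ha, rfl⟩ | ⟨b, -, rfl⟩
  · simp_all
  · simp at hy

theorem InMeet.unpair_snd_mem_right {S T : Set ℕ} {k : ℕ} (h : InMeet S T k)
    (hk : meetLeft k = none) : k.unpair.2 ∈ T := by
  rcases h with ⟨a, -, rfl⟩ | ⟨b, hb, rfl⟩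
  · simp at hk
  · simpa using hb

section Meet

variable {Λ₁ Λ₂ : Type*} {Adom : ℕ → Λ₁ → Prop} {Aval : ℕ → Λ₁ → Set ℕ}
  {Bdom : ℕ → Λ₂ → Prop} {Bval : ℕ → Λ₂ → Set ℕ} {p : ℕ → ℕ → ℕ}

theorem isUniformChoice_rfindOpt_meetLeft (hBtot : ∀ n, ∃ d, Bdom n d)
    (hchoice : ∀ m n c d, Adom m c → Bdom n d → InMeet (Aval m c) (Bval n d) (p m n))
    (hleft : ∀ m, (∃ c, Adom m c) → ∃ n, meetLeft (p m n) ≠ none) :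
    IsUniformChoice Adom Aval fun m => Nat.rfindOpt fun n => meetLeft (p m n) := by
  intro m hm
  obtain ⟨n, hn⟩ := hleft m hm
  have hdom : (Nat.rfindOpt fun n => meetLeft (p m n)).Dom :=
    Nat.rfindOpt_dom.2 ⟨n, Option.ne_none_iff_exists'.1 hn⟩
  refine ⟨_, Part.get_mem hdom, fun c hc => ?_⟩
  obtain ⟨n', hn'⟩ := Nat.rfindOpt_spec (Part.get_mem hdom)
  obtain ⟨d, hd⟩ := hBtot n'
  exact (hchoice m n' c d hc hd).mem_left hn'

theorem isUniformChoice_unpair_snd {m₀ : ℕ} {c₀ : Λ₁} (hc₀ : Adom m₀ c₀)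
    (hchoice : ∀ m n c d, Adom m c → Bdom n d → InMeet (Aval m c) (Bval n d) (p m n))
    (hright : ∀ n, meetLeft (p m₀ n) = none) :
    IsUniformChoice Bdom Bval fun n => Part.some (p m₀ n).unpair.2 :=
  fun n _ => ⟨_, Part.mem_some _, fun d hd =>
    (hchoice m₀ n c₀ d hc₀ hd).unpair_snd_mem_right (hright n)⟩

end Meet

/-- the meet `A ⊓ B` of bilayer functions preserves
non-computability from both sides. If `B` is total in its public argument and
there is a computable `p` with `p m n ∈ (A ⊓ B)(⟨m,n⟩ ∣ (c,d))` for all valid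
inputs (outputs coded as pairs `⟨i,k⟩` with `i < 2`), then either `A` or `B`
admits a partial computable choice function uniform in its public input. -/
theorem stmt9 {Λ₁ Λ₂ : Type}
    (Adom : ℕ → Λ₁ → Prop) (Aval : ℕ → Λ₁ → Set ℕ)
    (Bdom : ℕ → Λ₂ → Prop) (Bval : ℕ → Λ₂ → Set ℕ)
    (hBtot : ∀ n : ℕ, ∃ d, Bdom n d)
    (p : ℕ → ℕ → ℕ) (hp : Computable₂ p)
    (hchoice : ∀ (m n : ℕ) (c : Λ₁) (d : Λ₂), Adom m c → Bdom n d →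
      (∃ a ∈ Aval m c, p m n = Nat.pair 0 a) ∨
      (∃ b ∈ Bval n d, p m n = Nat.pair 1 b)) :
    (∃ q : ℕ →. ℕ, Partrec q ∧ ∀ m : ℕ, (∃ c, Adom m c) →
      ∃ y ∈ q m, ∀ c, Adom m c → y ∈ Aval m c) ∨
    (∃ q : ℕ →. ℕ, Partrec q ∧ ∀ n : ℕ, (∃ d, Bdom n d) →
      ∃ y ∈ q n, ∀ d, Bdom n d → y ∈ Bval n d) := by
  by_cases hleft : ∀ m, (∃ c, Adom m c) → ∃ n, meetLeft (p m n) ≠ none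
  · exact Or.inl ⟨_, Partrec.rfindOpt (computable_meetLeft.comp₂ hp),
      isUniformChoice_rfindOpt_meetLeft hBtot hchoice hleft⟩
  · push Not at hleft
    obtain ⟨m₀, ⟨c₀, hc₀⟩, hright⟩ := hleft
    have hq : Computable fun n => (p m₀ n).unpair.2 :=
      Computable.snd.comp (Computable.unpair.comp (hp.comp (Computable.const m₀) Computable.id))
    exact Or.inr ⟨_, hq.partrec,
      isUniformChoice_unpair_snd hc₀ hchoice hright⟩
end

section
/- Consider a well-founded tree T ⊆ ℕ^{<ℕ} such that every non-leaf node has cofinitely many immediate successors (i.e., {n : σ⌢n ∈ T} is cofinite in ℕ). Label the nodes of T by values in ℕ ∪ {∞} recursively: a leaf ρ gets label Φ(ρ) ∈ ℕ for a given function Φ on leaves; a non-leaf σ gets label c ∈ ℕ if infinitely many immediate successors of σ have label c (choosing the least such c), and label ∞ if no c ∈ ℕ occurs infinitely often among successor labels. Then: if the root has label c ∈ ℕ, for every function z : ℕ^{<ℕ} → ℕ there exists a leaf ρ = ⟨x_1,...,x_n⟩ of T with Φ(ρ) = c and x_{i+1} ≥ z(⟨x_1,...,x_i⟩) for each i < n.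 -/
/-- A tree: a set of finite sequences closed under initial segments. -/
def IsTree (T : Set (List ℕ)) : Prop :=
  ∀ s t : List ℕ, s <+: t → t ∈ T → s ∈ T

/-- A leaf: a maximal node of `T`. -/
def IsLeaf (T : Set (List ℕ)) (t : List ℕ) : Prop :=
  t ∈ T ∧ ∀ n : ℕ, t ++ [n] ∉ T

/-- Well-foundedness: no infinite path lies entirely in `T`. -/
def WellFoundedTree (T : Set (List ℕ)) : Prop :=
  ∀ x : ℕ → ℕ, ∃ i : ℕ, (List.range i).map x ∉ T

/-- labeling lemma. In a well-founded tree whose non-leaf nodes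
have cofinitely many immediate successors, label nodes recursively: a leaf `ρ`
gets `Φ ρ`; a non-leaf gets the least `c ∈ ℕ` occurring as the label of
infinitely many immediate successors, or `∞` (here `none`) if there is no such
`c`. If the root is labeled `c ∈ ℕ`, then for every bound function `z` there is
a leaf `ρ` with `Φ ρ = c` all of whose entries dominate `z` on the
corresponding initial segments. -/
theorem stmt14 (T : Set (List ℕ)) (hT : IsTree T) (hroot : [] ∈ T)
    (hwf : WellFoundedTree T)
    (hcof : ∀ σ ∈ T, ¬ IsLeaf T σ → {n : ℕ | σ ++ [n] ∉ T}.Finite)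
    (Φ : List ℕ → ℕ) (label : List ℕ → Option ℕ)
    (hlabLeaf : ∀ σ : List ℕ, IsLeaf T σ → label σ = some (Φ σ))
    (hlabSome : ∀ σ ∈ T, ¬ IsLeaf T σ → ∀ c : ℕ,
      (label σ = some c ↔
        ({n : ℕ | σ ++ [n] ∈ T ∧ label (σ ++ [n]) = some c}.Infinite ∧
          ∀ c' < c, ¬ {n : ℕ | σ ++ [n] ∈ T ∧ label (σ ++ [n]) = some c'}.Infinite)))
    (hlabNone : ∀ σ ∈ T, ¬ IsLeaf T σ →
      (label σ = none ↔
        ∀ c : ℕ, ¬ {n : ℕ | σ ++ [n] ∈ T ∧ label (σ ++ [n]) = some c}.Infinite))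
    (c : ℕ) (hrootlab : label [] = some c) :
    ∀ z : List ℕ → ℕ, ∃ ρ : List ℕ, IsLeaf T ρ ∧ Φ ρ = c ∧
      ∀ i < ρ.length, z (ρ.take i) ≤ ρ.getD i 0 := by
  intro z
  by_contra hno
  push_neg at hno
  -- invariant
  set P : List ℕ → Prop := fun σ => σ ∈ T ∧ label σ = some c ∧
    ∀ i < σ.length, z (σ.take i) ≤ σ.getD i 0 with hP
  have hnotleaf : ∀ σ, P σ → ¬ IsLeaf T σ := by
    intro σ hσ hl
    have := hlabLeaf σ hl
    rw [hσ.2.1] at this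
    have hΦ : Φ σ = c := by
      exact (Option.some_injective _ this).symm
    obtain ⟨i, hi, hlt⟩ := hno σ hl hΦ
    exact absurd (hσ.2.2 i hi) (by omega)
  have key : ∀ σ, P σ → ∃ n, P (σ ++ [n]) := by
    intro σ hσ
    have hnl := hnotleaf σ hσ
    have hinf : {n : ℕ | σ ++ [n] ∈ T ∧ label (σ ++ [n]) = some c}.Infinite :=
      ((hlabSome σ hσ.1 hnl c).mp hσ.2.1).1
    obtain ⟨n, hn, hzn⟩ := hinf.exists_gt (z σ)
    refine ⟨n, hn.1, hn.2, ?_⟩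
    intro i hi
    simp only [List.length_append, List.length_cons, List.length_nil] at hi
    rcases Nat.lt_or_ge i σ.length with h | h
    · rw [List.take_append_of_le_length h.le, List.getD_append _ _ _ _ h]
      exact hσ.2.2 i h
    · have hieq : i = σ.length := by omega
      subst hieq
      rw [List.take_left, List.getD_append_right _ _ _ _ h]
      simpa using hzn.le
  classical
  -- choice function
  have base : P [] := ⟨hroot, hrootlab, by simp⟩
  let g : List ℕ → ℕ := fun σ => if h : P σ then Classical.choose (key σ h) else 0
  have hg : ∀ σ, P σ → P (σ ++ [g σ]) := by
    intro σ h
    simp only [g, dif_pos h]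
    exact Classical.choose_spec (key σ h)
  let s : ℕ → List ℕ := fun k => Nat.rec [] (fun _ l => l ++ [g l]) k
  have hs : ∀ k, P (s k) := by
    intro k
    induction k with
    | zero => exact base
    | succ k ih => exact hg _ ih
  let x : ℕ → ℕ := fun i => g (s i)
  have hsx : ∀ k, s k = (List.range k).map x := by
    intro k
    induction k with
    | zero => simp [s]
    | succ k ih =>
      have : s (k+1) = s k ++ [g (s k)] := rfl
      rw [this, ih, List.range_succ, List.map_append]
      simp [x, ih]
  obtain ⟨i, hi⟩ := hwf x
  exact hi (by rw [← hsx i]; exact (hs i).1)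
end
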